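/- Let X be a set and let M be a commutative family of transformations of X. If ≽ is an acyclic, M-coherent binary relation on X, then ≽ has an extension to a complete preorder on X that is strongly M-coherent. -/
import Mathlib


/-- The strict part of a binary relation: `x ≻ y` iff `x ≽ y` and not `y ≽ x`. -/
def StrictRel {X : Type*} (R : X → X → Prop) (x y : X) : Prop := R x y ∧ ¬ R y x

/-- `R` is `M`-coherent: every `ω ∈ M` preserves the weak and the strict relation. -/
def Coherent {X : Type*} (M : Set (X → X)) (R : X → X → Prop) : Prop :=
  ∀ ω ∈ M, ∀ x y : X, (R x y → R (ω x) (ω y)) ∧ (StrictRel R x y → StrictRel R (ω x) (ω y))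

/-- `R` is strongly `M`-coherent: coherent, and the converse implications also hold. -/
def StronglyCoherent {X : Type*} (M : Set (X → X)) (R : X → X → Prop) : Prop :=
  Coherent M R ∧
    ∀ ω ∈ M, ∀ x y : X, (R (ω x) (ω y) → R x y) ∧ (StrictRel R (ω x) (ω y) → StrictRel R x y)

/-- `R` is acyclic: there is no `k ≥ 2` and distinct `x₁, …, x_k` with
`x₁ ≽ x₂ ≽ … ≽ x_k` and `x_k ≻ x₁`.  (Indices here run from `0` to `k-1`.) -/
def Acyclic {X : Type*} (R : X → X → Prop) : Prop :=
  ¬ ∃ (k : ℕ) (x : ℕ → X), 2 ≤ k ∧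
      (∀ i j, i < k → j < k → x i = x j → i = j) ∧
      (∀ i, i + 1 < k → R (x i) (x (i + 1))) ∧
      StrictRel R (x (k - 1)) (x 0)

/-- `R'` is an extension of `R`. -/
def IsExtension {X : Type*} (R R' : X → X → Prop) : Prop :=
  (∀ x y, R x y → R' x y) ∧ (∀ x y, StrictRel R x y → StrictRel R' x y)

/-- A commutative family of transformations: nonempty, pairwise commuting, containing
the identity, and closed under composition. -/
def CommFamily {X : Type*} (M : Set (X → X)) : Prop :=
  M.Nonempty ∧ (∀ f ∈ M, ∀ g ∈ M, f ∘ g = g ∘ f) ∧ (id ∈ M) ∧ (∀ f ∈ M, ∀ g ∈ M, f ∘ g ∈ M)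

namespace ACEAux

variable {X : Type*}

/-- From an `R`-chain with a strict back edge, contradiction with acyclicity. -/
theorem noCycle {R : X → X → Prop} (hacyc : Acyclic R) :
    ∀ n (f : ℕ → X), (∀ i, i < n → R (f i) (f (i + 1))) → StrictRel R (f n) (f 0) → False := by
  intro n
  induction n using Nat.strong_induction_on with
  | _ n IH =>
    intro f hchain hstr
    rcases Nat.eq_zero_or_pos n with hn | hn
    · subst hn; exact hstr.2 hstr.1
    by_cases hdup : ∃ i j, i < j ∧ j ≤ n ∧ f i = f j
    · obtain ⟨i, j, hij, hjn, hfij⟩ := hdup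
      rcases eq_or_lt_of_le hjn with hj | hj
      · -- j = n : shorten to 0..i
        subst hj
        exact IH i hij f (fun k hk => hchain k (lt_trans hk hij)) (hfij ▸ hstr)
      · -- j < n : cut out the loop (i, j]
        set d := j - i with hd
        have hd1 : 1 ≤ d := by omega
        set n' := n - d with hn'
        have hin' : i < n' := by omega
        have hn'n : n' < n := by omega
        refine IH n' hn'n (fun k => if k ≤ i then f k else f (k + d)) ?_ ?_
        · intro k hk
          rcases lt_trichotomy k i with h | h | h
          · simp only [if_pos (le_of_lt h), if_pos (Nat.succ_le_of_lt h)]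
            exact hchain k (by omega)
          · subst h
            simp only [if_pos (le_refl k), if_neg (by omega : ¬ k + 1 ≤ k)]
            have : k + 1 + d = j + 1 := by omega
            rw [this, hfij]
            exact hchain j hj
          · simp only [if_neg (by omega : ¬ k ≤ i), if_neg (by omega : ¬ k + 1 ≤ i)]
            have : k + 1 + d = k + d + 1 := by omega
            rw [this]
            exact hchain (k + d) (by omega)
        · simp only [if_neg (by omega : ¬ n' ≤ i), if_pos (Nat.zero_le i)]
          have : n' + d = n := by omega
          rw [this]
          exact hstr
    · -- all distinct : contradicts acyclicity
      push_neg at hdup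
      refine hacyc ⟨n + 1, f, by omega, ?_, fun i hi => hchain i (by omega), ?_⟩
      · intro a b ha hb hab
        by_contra hne
        rcases lt_or_gt_of_ne hne with h | h
        · exact hdup a b h (by omega) hab
        · exact hdup b a h (by omega) hab.symm
      · simpa using hstr

/-- Convert a `ReflTransGen` path into a finite chain. -/
theorem rtg_chain {B : X → X → Prop} {a b : X} (h : Relation.ReflTransGen B a b) :
    ∃ (n : ℕ) (f : ℕ → X), f 0 = a ∧ f n = b ∧ ∀ i, i < n → B (f i) (f (i + 1)) := by
  induction h with
  | refl => exact ⟨0, fun _ => a, rfl, rfl, fun i hi => absurd hi (Nat.not_lt_zero i)⟩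
  | @tail b' c' _ h2 ih =>
    obtain ⟨n, f, h0, hn, hc⟩ := ih
    refine ⟨n + 1, fun i => if i ≤ n then f i else c', by simp [h0], by simp, ?_⟩
    intro i hi
    rcases lt_or_eq_of_le (Nat.lt_succ_iff.mp hi) with h | h
    · simp only [if_pos (le_of_lt h), if_pos (Nat.succ_le_of_lt h)]
      exact hc i h
    · subst h
      simp only [if_pos (le_refl i), if_neg (by omega : ¬ i + 1 ≤ i), hn]
      exact h2

end ACEAux

namespace ACEAux2

open Relation

variable {X : Type*} {M : Set (X → X)} {B : X → X → Prop}

/-- The `M`-closure of a relation `B`. -/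
def Cl (M : Set (X → X)) (B : X → X → Prop) (a b : X) : Prop :=
  ∃ τ ∈ M, Relation.ReflTransGen B (τ a) (τ b)

theorem rtg_push (hB : ∀ ω ∈ M, ∀ a b, B a b → B (ω a) (ω b)) {ρ : X → X} (hρ : ρ ∈ M)
    {a b : X} (h : ReflTransGen B a b) : ReflTransGen B (ρ a) (ρ b) := by
  induction h with
  | refl => exact ReflTransGen.refl
  | tail _ h2 ih => exact ih.tail (hB ρ hρ _ _ h2)

theorem cl_refl (hM : CommFamily M) : Reflexive (Cl M B) :=
  fun _ => ⟨id, hM.2.2.1, ReflTransGen.refl⟩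

theorem cl_sub (hM : CommFamily M) {a b : X} (h : B a b) : Cl M B a b :=
  ⟨id, hM.2.2.1, ReflTransGen.single h⟩

theorem cl_trans (hM : CommFamily M) (hB : ∀ ω ∈ M, ∀ a b, B a b → B (ω a) (ω b)) :
    Transitive (Cl M B) := by
  rintro a b c ⟨τ₁, h1, c1⟩ ⟨τ₂, h2, c2⟩
  refine ⟨τ₂ ∘ τ₁, hM.2.2.2 τ₂ h2 τ₁ h1, ?_⟩
  have e := hM.2.1 τ₁ h1 τ₂ h2
  have c2' := rtg_push hB h1 c2
  rw [show τ₁ (τ₂ b) = τ₂ (τ₁ b) from congrFun e b,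
      show τ₁ (τ₂ c) = τ₂ (τ₁ c) from congrFun e c] at c2'
  exact (rtg_push hB h2 c1).trans c2'

theorem cl_push (hM : CommFamily M) (hB : ∀ ω ∈ M, ∀ a b, B a b → B (ω a) (ω b))
    {ρ : X → X} (hρ : ρ ∈ M) {a b : X} (h : Cl M B a b) : Cl M B (ρ a) (ρ b) := by
  obtain ⟨τ, hτ, c⟩ := h
  refine ⟨τ, hτ, ?_⟩
  have c' := rtg_push hB hρ c
  have e := hM.2.1 ρ hρ τ hτ
  rwa [show ρ (τ a) = τ (ρ a) from congrFun e a,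
       show ρ (τ b) = τ (ρ b) from congrFun e b] at c'

theorem cl_pull (hM : CommFamily M) {ρ : X → X} (hρ : ρ ∈ M) {a b : X}
    (h : Cl M B (ρ a) (ρ b)) : Cl M B a b := by
  obtain ⟨τ, hτ, c⟩ := h
  exact ⟨τ ∘ ρ, hM.2.2.2 τ hτ ρ hρ, c⟩

theorem cl_strong (hM : CommFamily M) (hB : ∀ ω ∈ M, ∀ a b, B a b → B (ω a) (ω b)) :
    StronglyCoherent M (Cl M B) := by
  constructor
  · intro ω hω a b
    refine ⟨cl_push hM hB hω, ?_⟩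
    rintro ⟨h1, h2⟩
    exact ⟨cl_push hM hB hω h1, fun h => h2 (cl_pull hM hω h)⟩
  · intro ω hω a b
    refine ⟨cl_pull hM hω, ?_⟩
    rintro ⟨h1, h2⟩
    exact ⟨cl_pull hM hω h1, fun h => h2 (cl_push hM hB hω h)⟩

/-- Strict preservation for the closure of the original acyclic relation. -/
theorem cl_base_strict {R : X → X → Prop} (hM : CommFamily M) (hacyc : Acyclic R)
    (hcoh : Coherent M R) {a b : X} (h : StrictRel R a b) : StrictRel (Cl M R) a b := by
  refine ⟨cl_sub hM h.1, ?_⟩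
  rintro ⟨τ, hτ, c⟩
  obtain ⟨n, f, h0, hn, hc⟩ := ACEAux.rtg_chain c
  have hstr : StrictRel R (τ a) (τ b) := (hcoh τ hτ a b).2 h
  exact ACEAux.noCycle hacyc n f hc (by rw [hn, h0]; exact hstr)

end ACEAux2

namespace ACEAux3

open Relation ACEAux2

variable {X : Type*} {M : Set (X → X)}

/-- `T` extended by all pairs `(ω x, ω y)` for `ω ∈ M`. -/
def PairRel (M : Set (X → X)) (T : X → X → Prop) (x y : X) (a b : X) : Prop :=
  T a b ∨ ∃ ω ∈ M, a = ω x ∧ b = ω y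

theorem pairRel_coh (hM : CommFamily M) {T : X → X → Prop} (hT : ∀ ω ∈ M, ∀ a b, T a b → T (ω a) (ω b))
    (x y : X) : ∀ ω ∈ M, ∀ a b, PairRel M T x y a b → PairRel M T x y (ω a) (ω b) := by
  rintro ω hω a b (h | ⟨σ, hσ, rfl, rfl⟩)
  · exact Or.inl (hT ω hω a b h)
  · exact Or.inr ⟨ω ∘ σ, hM.2.2.2 ω hω σ hσ, rfl, rfl⟩

/-- A chain from `a` to `b` passing through at least one pair edge. -/
def ChainTo (M : Set (X → X)) (T : X → X → Prop) (x y a b : X) : Prop :=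
  ∃ (m : ℕ) (f : ℕ → X → X), 0 < m ∧ (∀ i, f i ∈ M) ∧ T a (f 0 x) ∧
    (∀ i, i + 1 < m → T (f i y) (f (i + 1) x)) ∧ T (f (m - 1) y) b

theorem rtg_pair {T : X → X → Prop} (hrefl : Reflexive T) (htrans : Transitive T)
    {x y a b : X} (h : ReflTransGen (PairRel M T x y) a b) :
    T a b ∨ ChainTo M T x y a b := by
  induction h with
  | refl => exact Or.inl (hrefl a)
  | @tail b' c' _ h2 ih =>
    rcases h2 with h2 | ⟨ω, hω, rfl, rfl⟩
    · rcases ih with ih | ⟨m, f, hm, hfM, h0, hmid, hlast⟩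
      · exact Or.inl (htrans ih h2)
      · exact Or.inr ⟨m, f, hm, hfM, h0, hmid, htrans hlast h2⟩
    · rcases ih with ih | ⟨m, f, hm, hfM, h0, hmid, hlast⟩
      · exact Or.inr ⟨1, fun _ => ω, Nat.one_pos, fun _ => hω, ih,
          fun i hi => absurd hi (by omega), hrefl _⟩
      · refine Or.inr ⟨m + 1, fun i => if i < m then f i else ω, by omega, ?_, ?_, ?_, ?_⟩
        · intro i; by_cases h : i < m <;> simp [h, hfM, hω]
        · simpa [hm] using h0
        · intro i hi
          rcases lt_or_eq_of_le (by omega : i + 1 ≤ m) with h | h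
          · simp only [if_pos (by omega : i < m), if_pos h]
            exact hmid i h
          · simp only [if_pos (by omega : i < m), if_neg (by omega : ¬ i + 1 < m)]
            have : i = m - 1 := by omega
            rw [this]
            exact hlast
        · simp only [Nat.add_sub_cancel, if_neg (lt_irrefl m)]
          exact hrefl _

/-- From the failure of the one-pair extension to preserve strict pairs,
extract a cyclic certificate. -/
theorem fail_cert (hM : CommFamily M) {T : X → X → Prop} (hrefl : Reflexive T)
    (htrans : Transitive T) (hsc : StronglyCoherent M T) {x y : X}
    (hfail : ∃ u v, StrictRel T u v ∧ Cl M (PairRel M T x y) v u) :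
    ∃ (m : ℕ) (f : ℕ → X → X), 0 < m ∧ (∀ i, f i ∈ M) ∧
      (∀ i, i + 1 < m → T (f i y) (f (i + 1) x)) ∧ StrictRel T (f (m - 1) y) (f 0 x) := by
  obtain ⟨u, v, hstr, τ, hτ, c⟩ := hfail
  have hstr' : StrictRel T (τ u) (τ v) := (hsc.1 τ hτ u v).2 hstr
  rcases rtg_pair hrefl htrans c with h | ⟨m, f, hm, hfM, h0, hmid, hlast⟩
  · exact absurd h hstr'.2
  · refine ⟨m, f, hm, hfM, hmid, ?_, ?_⟩
    · exact htrans (htrans hlast hstr'.1) h0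
    · intro hcon
      exact hstr'.2 (htrans (htrans h0 hcon) hlast)

/-- Two opposite certificates yield a contradiction. -/
theorem combine (hM : CommFamily M) {T : X → X → Prop}
    (hrefl : Reflexive T) (htrans : Transitive T) (hco : Coherent M T) (x y : X)
    {m : ℕ} {f : ℕ → X → X} (hm : 0 < m) (hfM : ∀ i, f i ∈ M)
    (hmid : ∀ i, i + 1 < m → T (f i y) (f (i + 1) x)) (hstr : StrictRel T (f (m - 1) y) (f 0 x))
    {p : ℕ} {g : ℕ → X → X} (hp : 0 < p) (hgM : ∀ j, g j ∈ M)
    (hmid' : ∀ j, j + 1 < p → T (g j x) (g (j + 1) y)) (hlast' : T (g (p - 1) x) (g 0 y)) :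
    False := by
  -- cyclic (mod m) version of the f-relations
  have hrelf : ∀ i, T (f (i % m) y) (f ((i + 1) % m) x) := by
    intro i
    have him : i % m < m := Nat.mod_lt i hm
    rcases Nat.lt_or_ge (i % m + 1) m with h | h
    · have hm2 : 1 < m := by omega
      have e : (i + 1) % m = i % m + 1 := by
        rw [Nat.add_mod, Nat.mod_eq_of_lt hm2, Nat.mod_eq_of_lt h]
      rw [e]; exact hmid _ h
    · have e1 : i % m = m - 1 := by omega
      have e : (i + 1) % m = 0 := by
        rcases Nat.lt_or_ge 1 m with h1 | h1
        · rw [Nat.add_mod, Nat.mod_eq_of_lt h1, e1, Nat.sub_add_cancel hm, Nat.mod_self]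
        · have : m = 1 := by omega
          simp [this, Nat.mod_one]
      rw [e, e1]; exact hstr.1
  have hrelg : ∀ j, T (g (j % p) x) (g ((j + 1) % p) y) := by
    intro j
    have hjp : j % p < p := Nat.mod_lt j hp
    rcases Nat.lt_or_ge (j % p + 1) p with h | h
    · have hp2 : 1 < p := by omega
      have e : (j + 1) % p = j % p + 1 := by
        rw [Nat.add_mod, Nat.mod_eq_of_lt hp2, Nat.mod_eq_of_lt h]
      rw [e]; exact hmid' _ h
    · have e1 : j % p = p - 1 := by omega
      have e : (j + 1) % p = 0 := by
        rcases Nat.lt_or_ge 1 p with h1 | h1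
        · rw [Nat.add_mod, Nat.mod_eq_of_lt h1, e1, Nat.sub_add_cancel hp, Nat.mod_self]
        · have : p = 1 := by omega
          simp [this, Nat.mod_one]
      rw [e, e1]; exact hlast'
  -- the alternating walk
  set Y : ℕ → X := fun k => g (k % p) (f (k % m) y) with hY
  have step1 : ∀ k, T (Y k) (g (k % p) (f ((k + 1) % m) x)) := by
    intro k
    exact (hco (g (k % p)) (hgM _) _ _).1 (hrelf k)
  have step2 : ∀ k, T (g (k % p) (f ((k + 1) % m) x)) (Y (k + 1)) := by
    intro k
    have h1 := (hco (f ((k + 1) % m)) (hfM _) _ _).1 (hrelg k)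
    have e1 : f ((k + 1) % m) (g (k % p) x) = g (k % p) (f ((k + 1) % m) x) :=
      congrFun (hM.2.1 _ (hfM _) _ (hgM _)) x
    have e2 : f ((k + 1) % m) (g ((k + 1) % p) y) = g ((k + 1) % p) (f ((k + 1) % m) y) :=
      congrFun (hM.2.1 _ (hfM _) _ (hgM _)) y
    rw [e1, e2] at h1
    exact h1
  have hstep : ∀ k, T (Y k) (Y (k + 1)) := fun k => htrans (step1 k) (step2 k)
  have hmono : ∀ a b, a ≤ b → T (Y a) (Y b) := by
    intro a b hab
    induction b, hab using Nat.le_induction with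
    | base => exact hrefl _
    | succ b _ ih => exact htrans ih (hstep b)
  -- the strict step at k = m - 1
  have hs1 : StrictRel T (Y (m - 1)) (g ((m - 1) % p) (f (m % m) x)) := by
    have hb : StrictRel T (f ((m - 1) % m) y) (f (m % m) x) := by
      rw [Nat.mod_self, Nat.mod_eq_of_lt (by omega : m - 1 < m)]
      exact hstr
    exact (hco (g ((m - 1) % p)) (hgM _) _ _).2 hb
  have hs2 : T (g ((m - 1) % p) (f (m % m) x)) (Y m) := by
    have := step2 (m - 1)
    rwa [Nat.sub_add_cancel hm] at this
  have hs3 : T (Y m) (Y (m - 1 + m * p)) := by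
    refine hmono _ _ ?_
    have : m ≤ m * p := Nat.le_mul_of_pos_right m hp
    omega
  have hYeq : Y (m - 1 + m * p) = Y (m - 1) := by
    have e1 : (m - 1 + m * p) % m = (m - 1) % m := Nat.add_mul_mod_self_left (m - 1) m p
    have e2 : (m - 1 + m * p) % p = (m - 1) % p := Nat.add_mul_mod_self_right (m - 1) m p
    simp only [hY, e1, e2]
  rw [hYeq] at hs3
  exact hs1.2 (htrans hs2 hs3)

end ACEAux3

open ACEAux2 ACEAux3

/-- **Theorem 1.** If `M` is a commutative family and `≽` is an acyclic `M`-coherent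
binary relation, then `≽` has a strongly `M`-coherent complete preorder extension. -/
theorem acyclic_coherent_extension {X : Type*} (M : Set (X → X)) (R : X → X → Prop)
    (hM : CommFamily M) (hacyc : Acyclic R) (hcoh : Coherent M R) :
    ∃ R' : X → X → Prop, IsExtension R R' ∧ Reflexive R' ∧ Transitive R' ∧
      (∀ x y, R' x y ∨ R' y x) ∧ StronglyCoherent M R' := by
  classical
  have hRw : ∀ ω ∈ M, ∀ a b, R a b → R (ω a) (ω b) := fun ω hω a b => (hcoh ω hω a b).1
  set Pset : Set (Set (X × X)) := {S | IsExtension R (fun a b => (a, b) ∈ S) ∧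
    Reflexive (fun a b => (a, b) ∈ S) ∧ Transitive (fun a b => (a, b) ∈ S) ∧
    StronglyCoherent M (fun a b => (a, b) ∈ S)} with hPset
  -- the `M`-closure of `R` is a base point of the Zorn poset
  have hbase : {q : X × X | Cl M R q.1 q.2} ∈ Pset := by
    exact ⟨⟨fun a b h => cl_sub hM h, fun a b h => cl_base_strict hM hacyc hcoh h⟩,
      cl_refl hM, cl_trans hM hRw, cl_strong hM hRw⟩
  -- chains have upper bounds
  have hchainub : ∀ c ⊆ Pset, IsChain (· ⊆ ·) c → c.Nonempty →
      ∃ ub ∈ Pset, ∀ s ∈ c, s ⊆ ub := by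
    rintro c hcPset hchain ⟨S₀, hS₀⟩
    refine ⟨⋃₀ c, ?_, fun s hs => Set.subset_sUnion_of_mem hs⟩
    have hmem : ∀ {a b : X}, (a, b) ∈ ⋃₀ c ↔ ∃ S ∈ c, (a, b) ∈ S := fun {a b} => Set.mem_sUnion
    have hG : ∀ S ∈ c, S ∈ Pset := fun S hS => hcPset hS
    refine ⟨⟨?_, ?_⟩, ?_, ?_, ?_, ?_⟩
    · exact fun a b h => hmem.2 ⟨S₀, hS₀, (hG S₀ hS₀).1.1 a b h⟩
    · intro a b h
      refine ⟨hmem.2 ⟨S₀, hS₀, ((hG S₀ hS₀).1.2 a b h).1⟩, fun hba => ?_⟩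
      obtain ⟨S, hS, hS'⟩ := hmem.1 hba
      exact ((hG S hS).1.2 a b h).2 hS'
    · exact fun a => hmem.2 ⟨S₀, hS₀, (hG S₀ hS₀).2.1 a⟩
    · intro a b d hab hbd
      obtain ⟨S₁, hS₁, h₁⟩ := hmem.1 hab
      obtain ⟨S₂, hS₂, h₂⟩ := hmem.1 hbd
      rcases eq_or_ne S₁ S₂ with rfl | hne
      · exact hmem.2 ⟨S₁, hS₁, (hG S₁ hS₁).2.2.1 h₁ h₂⟩
      · rcases hchain hS₁ hS₂ hne with hsub | hsub
        · exact hmem.2 ⟨S₂, hS₂, (hG S₂ hS₂).2.2.1 (hsub h₁) h₂⟩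
        · exact hmem.2 ⟨S₁, hS₁, (hG S₁ hS₁).2.2.1 h₁ (hsub h₂)⟩
    · intro ω hω a b
      constructor
      · intro h
        obtain ⟨S, hS, h'⟩ := hmem.1 h
        exact hmem.2 ⟨S, hS, ((hG S hS).2.2.2.1 ω hω a b).1 h'⟩
      · rintro ⟨h1, h2⟩
        refine ⟨?_, fun hba => ?_⟩
        · obtain ⟨S, hS, h'⟩ := hmem.1 h1
          exact hmem.2 ⟨S, hS, ((hG S hS).2.2.2.1 ω hω a b).1 h'⟩
        · obtain ⟨S, hS, h'⟩ := hmem.1 hba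
          exact h2 (hmem.2 ⟨S, hS, ((hG S hS).2.2.2.2 ω hω b a).1 h'⟩)
    · intro ω hω a b
      constructor
      · intro h
        obtain ⟨S, hS, h'⟩ := hmem.1 h
        exact hmem.2 ⟨S, hS, ((hG S hS).2.2.2.2 ω hω a b).1 h'⟩
      · rintro ⟨h1, h2⟩
        refine ⟨?_, fun hba => ?_⟩
        · obtain ⟨S, hS, h'⟩ := hmem.1 h1
          exact hmem.2 ⟨S, hS, ((hG S hS).2.2.2.2 ω hω a b).1 h'⟩
        · obtain ⟨S, hS, h'⟩ := hmem.1 hba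
          exact h2 (hmem.2 ⟨S, hS, ((hG S hS).2.2.2.1 ω hω b a).1 h'⟩)
  obtain ⟨mS, -, hmax⟩ := zorn_subset_nonempty Pset hchainub _ hbase
  set Rm : X → X → Prop := fun a b => (a, b) ∈ mS with hRm
  have hGm : IsExtension R Rm ∧ Reflexive Rm ∧ Transitive Rm ∧ StronglyCoherent M Rm := hmax.1
  have hRmw : ∀ ω ∈ M, ∀ a b, Rm a b → Rm (ω a) (ω b) :=
    fun ω hω a b => (hGm.2.2.2.1 ω hω a b).1
  -- key step : incomparable pairs give failure certificates
  have key : ∀ x y : X, ¬ Rm x y → ¬ Rm y x →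
      ∃ u v, StrictRel Rm u v ∧ Cl M (PairRel M Rm x y) v u := by
    intro x y hxy _
    by_contra hfail
    have hBcoh := pairRel_coh hM hRmw x y
    have hS' : {q : X × X | Cl M (PairRel M Rm x y) q.1 q.2} ∈ Pset := by
      refine ⟨⟨?_, ?_⟩, cl_refl hM, cl_trans hM hBcoh, cl_strong hM hBcoh⟩
      · exact fun a b h => cl_sub hM (Or.inl (hGm.1.1 a b h))
      · intro a b h
        have hsm := hGm.1.2 a b h
        exact ⟨cl_sub hM (Or.inl hsm.1), fun hcon => hfail ⟨a, b, hsm, hcon⟩⟩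
    have hsubS' : mS ⊆ {q : X × X | Cl M (PairRel M Rm x y) q.1 q.2} := by
      intro q hq
      exact cl_sub hM (Or.inl (show Rm q.1 q.2 from hq))
    have hback := hmax.2 hS' hsubS'
    exact hxy (hback (cl_sub hM (Or.inr ⟨id, hM.2.2.1, rfl, rfl⟩)))
  have htotal : ∀ x y, Rm x y ∨ Rm y x := by
    intro x y
    by_contra hcon
    push_neg at hcon
    obtain ⟨hxy, hyx⟩ := hcon
    obtain ⟨m, f, hm, hfM, hmid, hstr⟩ :=
      fail_cert hM hGm.2.1 hGm.2.2.1 hGm.2.2.2 (key x y hxy hyx)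
    obtain ⟨p, g, hp, hgM, hmid', hstr'⟩ :=
      fail_cert hM hGm.2.1 hGm.2.2.1 hGm.2.2.2 (key y x hyx hxy)
    exact combine hM hGm.2.1 hGm.2.2.1 hGm.2.2.2.1 x y hm hfM hmid hstr hp hgM hmid' hstr'.1
  exact ⟨Rm, hGm.1, hGm.2.1, hGm.2.2.1, htotal, hGm.2.2.2⟩
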